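/- The term rewrite system over the signature {nat, 0 (constants), hd, tl, inc, s, d (unary), cons (binary)} with rules nat → cons(0, inc(nat)), hd(cons(x,y)) → x, tl(cons(x,y)) → y, inc(cons(x,y)) → cons(s(x), inc(y)), inc(tl(nat)) → tl(inc(nat)), and d(cons(x,y)) → cons(x, cons(x, d(y))) is confluent (this system is left-linear but not right-linear). -/

import Mathlib

open Relation

/-- Ground terms over the signature
{nat, 0 (constants), hd, tl, inc, s, d (unary), cons (binary)}. -/
inductive Tm : Type where
  | nat : Tm
  | zero : Tm
  | hd : Tm → Tm
  | tl : Tm → Tm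
  | inc : Tm → Tm
  | s : Tm → Tm
  | d : Tm → Tm
  | cons : Tm → Tm → Tm

/-- The one-step rewrite relation generated by the rules
`nat → cons(0, inc(nat))`, `hd(cons(x,y)) → x`, `tl(cons(x,y)) → y`,
`inc(cons(x,y)) → cons(s(x), inc(y))`, `inc(tl(nat)) → tl(inc(nat))`,
`d(cons(x,y)) → cons(x, cons(x, d(y)))`, closed under contexts. -/
inductive Step : Tm → Tm → Prop where
  | nat_rule : Step .nat (.cons .zero (.inc .nat))
  | hd_rule (t u : Tm) : Step (.hd (.cons t u)) t
  | tl_rule (t u : Tm) : Step (.tl (.cons t u)) u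
  | inc_rule (t u : Tm) : Step (.inc (.cons t u)) (.cons (.s t) (.inc u))
  | inc_tl_rule : Step (.inc (.tl .nat)) (.tl (.inc .nat))
  | d_rule (t u : Tm) : Step (.d (.cons t u)) (.cons t (.cons t (.d u)))
  | hd_cong {t u : Tm} : Step t u → Step (.hd t) (.hd u)
  | tl_cong {t u : Tm} : Step t u → Step (.tl t) (.tl u)
  | inc_cong {t u : Tm} : Step t u → Step (.inc t) (.inc u)
  | s_cong {t u : Tm} : Step t u → Step (.s t) (.s u)
  | d_cong {t u : Tm} : Step t u → Step (.d t) (.d u)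
  | cons_congl {t u : Tm} (v : Tm) : Step t u → Step (.cons t v) (.cons u v)
  | cons_congr {t u : Tm} (v : Tm) : Step t u → Step (.cons v t) (.cons v u)

/-- Confluence of a binary relation. -/
def Confluent {A : Type*} (r : A → A → Prop) : Prop :=
  ∀ s t u, ReflTransGen r s t → ReflTransGen r s u →
    ∃ v, ReflTransGen r t v ∧ ReflTransGen r u v

/-! Confluence is derived from the Z-property of Dehornoy and van Oostrom for the full
superdevelopment `bullet`: `t →* bullet t`, and `t → u` implies `u →* bullet t →* bullet u`.
The map `bullet` contracts redexes bottom-up, firing the root rule of `hd`, `tl`, `inc` or `d`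
once the argument has become a `cons`. The overlap `inc(tl(nat))` is harmless:
`bullet (inc (tl nat)) = inc (inc nat)` is reached from `tl (inc nat)` in three steps. -/

theorem Confluent.of_zProperty {α : Type*} {r : α → α → Prop} (f : α → α)
    (hext : ∀ a, ReflTransGen r a (f a))
    (hz : ∀ {a b}, r a b → ReflTransGen r b (f a) ∧ ReflTransGen r (f a) (f b)) :
    Confluent r := by
  have hmono : ∀ {a b}, ReflTransGen r a b → ReflTransGen r (f a) (f b) :=
    fun hab => ReflTransGen.lift' f (fun _ _ h => (hz h).2) _ _ hab
  have hstrip : ∀ {a b c}, r a b → ReflTransGen r a c → ReflTransGen r b (f c) :=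
    fun hab hac => (hz hab).1.trans (hmono hac)
  intro s t u hst hsu
  induction hst with
  | refl => exact ⟨u, hsu, .refl⟩
  | tail _ htt' ih =>
    obtain ⟨v, htv, huv⟩ := ih
    exact ⟨f v, hstrip htt' htv, huv.trans (hext v)⟩

local infix:50 " ⟶* " => ReflTransGen Step

namespace Tm

theorem reduces_hd {t u : Tm} (h : t ⟶* u) : hd t ⟶* hd u :=
  ReflTransGen.lift hd (fun _ _ => Step.hd_cong) _ _ h

theorem reduces_tl {t u : Tm} (h : t ⟶* u) : tl t ⟶* tl u :=
  ReflTransGen.lift tl (fun _ _ => Step.tl_cong) _ _ h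

theorem reduces_inc {t u : Tm} (h : t ⟶* u) : inc t ⟶* inc u :=
  ReflTransGen.lift inc (fun _ _ => Step.inc_cong) _ _ h

theorem reduces_s {t u : Tm} (h : t ⟶* u) : s t ⟶* s u :=
  ReflTransGen.lift s (fun _ _ => Step.s_cong) _ _ h

theorem reduces_d {t u : Tm} (h : t ⟶* u) : d t ⟶* d u :=
  ReflTransGen.lift d (fun _ _ => Step.d_cong) _ _ h

theorem reduces_cons {t t' u u' : Tm} (ht : t ⟶* t') (hu : u ⟶* u') :
    cons t u ⟶* cons t' u' :=
  (ReflTransGen.lift (cons · u) (fun _ _ => Step.cons_congl u) _ _ ht).trans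
    (ReflTransGen.lift (cons t') (fun _ _ => Step.cons_congr t') _ _ hu)

def contractHd : Tm → Tm
  | cons t _ => t
  | t => hd t

def contractTl : Tm → Tm
  | cons _ u => u
  | t => tl t

def contractInc : Tm → Tm
  | cons t u => cons (s t) (inc u)
  | t => inc t

def contractD : Tm → Tm
  | cons t u => cons t (cons t (d u))
  | t => d t

def bullet : Tm → Tm
  | nat => cons zero (inc nat)
  | zero => zero
  | hd t => contractHd (bullet t)
  | tl t => contractTl (bullet t)
  | inc t => contractInc (bullet t)
  | s t => s (bullet t)
  | d t => contractD (bullet t)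
  | cons t u => cons (bullet t) (bullet u)

theorem hd_reduces_contractHd (t : Tm) : hd t ⟶* contractHd t := by
  cases t <;> first | exact .refl | exact .single (.hd_rule _ _)

theorem tl_reduces_contractTl (t : Tm) : tl t ⟶* contractTl t := by
  cases t <;> first | exact .refl | exact .single (.tl_rule _ _)

theorem inc_reduces_contractInc (t : Tm) : inc t ⟶* contractInc t := by
  cases t <;> first | exact .refl | exact .single (.inc_rule _ _)

theorem d_reduces_contractD (t : Tm) : d t ⟶* contractD t := by
  cases t <;> first | exact .refl | exact .single (.d_rule _ _)

theorem reduces_bullet (t : Tm) : t ⟶* bullet t := by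
  induction t with
  | nat => exact .single .nat_rule
  | zero => exact .refl
  | hd t ih => exact (reduces_hd ih).trans (hd_reduces_contractHd _)
  | tl t ih => exact (reduces_tl ih).trans (tl_reduces_contractTl _)
  | inc t ih => exact (reduces_inc ih).trans (inc_reduces_contractInc _)
  | s t ih => exact reduces_s ih
  | d t ih => exact (reduces_d ih).trans (d_reduces_contractD _)
  | cons t u iht ihu => exact reduces_cons iht ihu

end Tm

namespace Step

open Tm

theorem contractHd_reduces {t u : Tm} (h : Step t u) : contractHd t ⟶* contractHd u := by
  cases t <;> first
    | exact .head (hd_cong h) (hd_reduces_contractHd u)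
    | cases h with
      | cons_congl _ h => exact .single h
      | cons_congr _ _ => exact .refl

theorem contractTl_reduces {t u : Tm} (h : Step t u) : contractTl t ⟶* contractTl u := by
  cases t <;> first
    | exact .head (tl_cong h) (tl_reduces_contractTl u)
    | cases h with
      | cons_congl _ _ => exact .refl
      | cons_congr _ h => exact .single h

theorem contractInc_reduces {t u : Tm} (h : Step t u) :
    contractInc t ⟶* contractInc u := by
  cases t <;> first
    | exact .head (inc_cong h) (inc_reduces_contractInc u)
    | cases h with
      | cons_congl _ h => exact .single (.cons_congl _ (.s_cong h))
      | cons_congr _ h => exact .single (.cons_congr _ (.inc_cong h))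

theorem contractD_reduces {t u : Tm} (h : Step t u) : contractD t ⟶* contractD u := by
  cases t <;> first
    | exact .head (d_cong h) (d_reduces_contractD u)
    | cases h with
      | cons_congl _ h => exact reduces_cons (.single h) (reduces_cons (.single h) .refl)
      | cons_congr _ h => exact .single (.cons_congr _ (.cons_congr _ (.d_cong h)))

theorem reduces_bullet_source {t u : Tm} (h : Step t u) : u ⟶* bullet t := by
  induction h with
  | nat_rule => exact .refl
  | hd_rule t _ => exact reduces_bullet t
  | tl_rule _ u => exact reduces_bullet u
  | inc_rule t u =>
    exact reduces_cons (reduces_s (reduces_bullet t)) (reduces_inc (reduces_bullet u))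
  | inc_tl_rule =>
    exact .head (.tl_cong (.inc_cong .nat_rule)) <| .head (.tl_cong (.inc_rule _ _)) <|
      .single (.tl_rule _ _)
  | d_rule t u =>
    exact reduces_cons (reduces_bullet t)
      (reduces_cons (reduces_bullet t) (reduces_d (reduces_bullet u)))
  | hd_cong _ ih => exact (reduces_hd ih).trans (hd_reduces_contractHd _)
  | tl_cong _ ih => exact (reduces_tl ih).trans (tl_reduces_contractTl _)
  | inc_cong _ ih => exact (reduces_inc ih).trans (inc_reduces_contractInc _)
  | s_cong _ ih => exact reduces_s ih
  | d_cong _ ih => exact (reduces_d ih).trans (d_reduces_contractD _)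
  | cons_congl v _ ih => exact reduces_cons ih (reduces_bullet v)
  | cons_congr v _ ih => exact reduces_cons (reduces_bullet v) ih

theorem bullet_reduces {t u : Tm} (h : Step t u) : bullet t ⟶* bullet u := by
  induction h with
  | nat_rule => exact reduces_cons .refl (.head (.inc_cong .nat_rule) (.single (.inc_rule _ _)))
  | hd_rule | tl_rule | inc_tl_rule => exact .refl
  | inc_rule _ u => exact reduces_cons .refl (inc_reduces_contractInc (bullet u))
  | d_rule _ u => exact reduces_cons .refl (reduces_cons .refl (d_reduces_contractD (bullet u)))
  | hd_cong _ ih => exact ReflTransGen.lift' contractHd (fun _ _ => contractHd_reduces) _ _ ih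
  | tl_cong _ ih => exact ReflTransGen.lift' contractTl (fun _ _ => contractTl_reduces) _ _ ih
  | inc_cong _ ih =>
    exact ReflTransGen.lift' contractInc (fun _ _ => contractInc_reduces) _ _ ih
  | s_cong _ ih => exact reduces_s ih
  | d_cong _ ih => exact ReflTransGen.lift' contractD (fun _ _ => contractD_reduces) _ _ ih
  | cons_congl _ _ ih => exact reduces_cons ih .refl
  | cons_congr _ _ ih => exact reduces_cons .refl ih

end Step

/-- The left-linear (but not right-linear) TRS `{nat → cons(0, inc(nat)),
hd(cons(x,y)) → x, tl(cons(x,y)) → y, inc(cons(x,y)) → cons(s(x), inc(y)),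
inc(tl(nat)) → tl(inc(nat)), d(cons(x,y)) → cons(x, cons(x, d(y)))}`
is confluent. -/
theorem example_confluent : Confluent Step :=
  Confluent.of_zProperty Tm.bullet Tm.reduces_bullet fun h =>
    ⟨h.reduces_bullet_source, h.bullet_reduces⟩
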